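/- Gap Safe screening test. Let f : ℝ^M → ℝ be convex and differentiable, Q ∈ ℝ^{N×N} symmetric positive semidefinite, A ∈ ℝ^{M×N}, and for each block i of a partition of the coordinates {1,…,N} let G_i : ℝ^{N_i} → ℝ ∪ {+∞} be proper convex lower semicontinuous. Let x⋆ be a minimizer of P(x) = (1/2)xᵀQx + f(Ax) + Σ_i G_i(x^{(i)}). Fix a block i, write A_i for the submatrix of A with columns in block i, and let x̂^{(i)} ∈ ℝ^{N_i} be a point such that 0 lies in the interior of ∂G_i(x̂^{(i)}). Let R ⊆ ℝ^M × ℝ^N be a set containing the point (∇f(A x⋆), Q x⋆). If sup_{(ζ, ω) ∈ R} σ°_{∂G_i(x̂^{(i)})}( −(A_iᵀ ζ + ω^{(i)}) ) < 1, then x⋆^{(i)} = x̂^{(i)}. -/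

import Mathlib

open Matrix
open scoped BigOperators

noncomputable section

/-- A function to `EReal` is proper if it is somewhere finite and nowhere `-∞`. -/
def ERealProper {E : Type*} (g : E → EReal) : Prop :=
  (∃ x, g x ≠ ⊤) ∧ ∀ x, g x ≠ ⊥

/-- Convexity for an `EReal`-valued function on a real vector space. -/
def ERealConvexOn {E : Type*} [AddCommMonoid E] [Module ℝ E] (g : E → EReal) : Prop :=
  ∀ x y : E, ∀ a b : ℝ, 0 ≤ a → 0 ≤ b → a + b = 1 →
    g (a • x + b • y) ≤ (a : EReal) * g x + (b : EReal) * g y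

/-- The subdifferential `∂g(u) = {v : ∀ y, g(y) ≥ g(u) + ⟨v, y − u⟩}`. -/
def subdiff {α : Type*} [Fintype α] (g : (α → ℝ) → EReal) (u : α → ℝ) :
    Set (α → ℝ) :=
  {v | ∀ y, g u + ((∑ a, v a * (y a - u a) : ℝ) : EReal) ≤ g y}

/-- The support function `σ_C(x) = sup_{y ∈ C} ⟨y, x⟩`, valued in `EReal`. -/
def suppFn {α : Type*} [Fintype α] (C : Set (α → ℝ)) (x : α → ℝ) : EReal :=
  ⨆ y ∈ C, ((∑ a, y a * x a : ℝ) : EReal)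

/-- The polar of the support function:
`σ°_C(v) = sup { ⟨v, x⟩ : σ_C(x) ≤ 1 }`, valued in `[0, +∞] ⊆ EReal`. -/
def polarSuppFn {α : Type*} [Fintype α] (C : Set (α → ℝ)) (v : α → ℝ) : EReal :=
  ⨆ x ∈ {x : α → ℝ | suppFn C x ≤ 1}, ((∑ a, v a * x a : ℝ) : EReal)

open Filter Topology in
lemma deriv_nonneg_of_min' {ψ : ℝ → ℝ} {D : ℝ} (h : HasDerivAt ψ D 0)
    (hm : ∀ t ∈ Set.Ioc (0:ℝ) 1, ψ 0 ≤ ψ t) : 0 ≤ D := by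
  have hs := hasDerivAt_iff_tendsto_slope.1 h
  have hle : 𝓝[>] (0:ℝ) ≤ 𝓝[≠] (0:ℝ) :=
    nhdsWithin_mono _ (fun x hx => ne_of_gt hx)
  have hs' := hs.mono_left hle
  refine ge_of_tendsto hs' ?_
  filter_upwards [Ioc_mem_nhdsGT_of_mem (Set.mem_Ico.2 ⟨le_refl _, one_pos⟩)] with t ht
  have h0 := hm t ht
  rw [slope_def_field]
  have ht0 : (0:ℝ) < t := ht.1
  simp only [sub_zero]
  exact div_nonneg (by linarith) ht0.le

lemma coe_sum' {α : Type*} (s : Finset α) (r : α → ℝ) :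
    ((∑ j ∈ s, r j : ℝ) : EReal) = ∑ j ∈ s, (r j : EReal) := by
  induction s using Finset.cons_induction with
  | empty => simp
  | cons a s ha ih => rw [Finset.sum_cons, Finset.sum_cons, EReal.coe_add, ih]

lemma ereal_sum_ne_top {α : Type*} (s : Finset α) (g : α → EReal)
    (h : ∀ j ∈ s, g j ≠ ⊤) : ∑ j ∈ s, g j ≠ ⊤ := by
  induction s using Finset.cons_induction with
  | empty => simp
  | cons a s ha ih =>
      rw [Finset.sum_cons]
      exact (EReal.add_lt_top (h a (Finset.mem_cons_self a s))
        (ih (fun j hj => h j (Finset.mem_cons_of_mem hj)))).ne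

lemma ereal_sum_ne_bot {α : Type*} (s : Finset α) (g : α → EReal)
    (h : ∀ j ∈ s, g j ≠ ⊥) : ∑ j ∈ s, g j ≠ ⊥ := by
  induction s using Finset.cons_induction with
  | empty => simp
  | cons a s ha ih =>
      rw [Finset.sum_cons]
      intro hbot
      rcases EReal.add_eq_bot_iff.1 hbot with hb | hb
      · exact h a (Finset.mem_cons_self a s) hb
      · exact ih (fun j hj => h j (Finset.mem_cons_of_mem hj)) hb

/-- Gap Safe screening: if `x⋆` minimizes
`P(x) = (1/2) xᵀ Q x + f(A x) + Σ_i G_i(x^{(i)})`, the set `R` contains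
`(∇f(A x⋆), Q x⋆)`, `0` is interior to `∂G_i(x̂^{(i)})`, and
`sup_{(ζ,ω) ∈ R} σ°_{∂G_i(x̂^{(i)})}(−(A_iᵀ ζ + ω^{(i)})) < 1`,
then `x⋆^{(i)} = x̂^{(i)}`. Blocks are the fibers of `blk : Fin N → ι`. -/
theorem gap_safe_screening
    {M N : ℕ} {ι : Type*} [Fintype ι] [DecidableEq ι]
    (blk : Fin N → ι)
    (f : (Fin M → ℝ) → ℝ)
    (hfconv : ConvexOn ℝ Set.univ f) (hfdiff : Differentiable ℝ f)
    (Q : Matrix (Fin N) (Fin N) ℝ) (hQ : Q.PosSemidef)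
    (A : Matrix (Fin M) (Fin N) ℝ)
    (G : ∀ i : ι, ({l : Fin N // blk l = i} → ℝ) → EReal)
    (hGproper : ∀ i, ERealProper (G i))
    (hGconv : ∀ i, ERealConvexOn (G i))
    (hGlsc : ∀ i, LowerSemicontinuous (G i))
    (P : (Fin N → ℝ) → EReal)
    (hP : ∀ x, P x = ((1 / 2 * (x ⬝ᵥ Q.mulVec x) + f (A.mulVec x) : ℝ) : EReal)
        + ∑ i, G i (fun l => x l.1))
    (xstar : Fin N → ℝ) (hmin : IsMinOn P Set.univ xstar)
    (i : ι) (xhat : {l : Fin N // blk l = i} → ℝ)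
    (hint : (0 : {l : Fin N // blk l = i} → ℝ) ∈ interior (subdiff (G i) xhat))
    (R : Set ((Fin M → ℝ) × (Fin N → ℝ)))
    (hR : ((fun m => fderiv ℝ f (A.mulVec xstar) (Pi.single m 1)), Q.mulVec xstar) ∈ R)
    (hscreen : (⨆ p ∈ R,
        polarSuppFn (subdiff (G i) xhat)
          (fun l => -((∑ m, A m l.1 * p.1 m) + p.2 l.1))) < 1) :
    ∀ l : {l : Fin N // blk l = i}, xstar l.1 = xhat l := by
  classical
  set ζ : Fin M → ℝ := fun m => fderiv ℝ f (A.mulVec xstar) (Pi.single m 1) with hζ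
  set ω : Fin N → ℝ := Q.mulVec xstar with hω
  set v : {l : Fin N // blk l = i} → ℝ := fun l => -((∑ m, A m l.1 * ζ m) + ω l.1) with hv
  set xs : {l : Fin N // blk l = i} → ℝ := fun l => xstar l.1 with hxs
  -- Step 0: all block values at xstar are finite.
  have hGbot : ∀ j, G j (fun l : {l : Fin N // blk l = j} => xstar l.1) ≠ ⊥ :=
    fun j => (hGproper j).2 _
  have hGtop : ∀ j, G j (fun l : {l : Fin N // blk l = j} => xstar l.1) ≠ ⊤ := by
    have hz : ∀ j, ∃ z, G j z ≠ ⊤ := fun j => (hGproper j).1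
    choose z hzfin using hz
    set x' : Fin N → ℝ := fun l => z (blk l) ⟨l, rfl⟩ with hx'
    have hx'res : ∀ j, (fun l : {l : Fin N // blk l = j} => x' l.1) = z j := by
      intro j
      funext l
      obtain ⟨l, hl⟩ := l
      subst hl
      rfl
    have hPx' : P x' ≠ ⊤ := by
      rw [hP]
      exact (EReal.add_lt_top (EReal.coe_ne_top _)
        (ereal_sum_ne_top _ _ (fun j _ => by rw [hx'res j]; exact hzfin j))).ne
    have hPs : P xstar ≠ ⊤ := ne_top_of_le_ne_top hPx' (hmin (Set.mem_univ x'))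
    rw [hP] at hPs
    have hsum_ne_top : ∑ j, G j (fun l : {l : Fin N // blk l = j} => xstar l.1) ≠ ⊤ := by
      intro htop
      rw [htop, EReal.add_top_of_ne_bot (EReal.coe_ne_bot _)] at hPs
      exact hPs rfl
    intro j htop
    apply hsum_ne_top
    rw [← Finset.add_sum_erase _ _ (Finset.mem_univ j), htop]
    exact EReal.top_add_of_ne_bot (ereal_sum_ne_bot _ _ (fun k _ => hGbot k))
  -- real values at xstar
  set c : ℝ := (G i xs).toReal with hcdef
  have hc : (c : EReal) = G i xs := EReal.coe_toReal (hGtop i) (hGbot i)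
  set S : ℝ := ∑ j ∈ Finset.univ.erase i,
      (G j (fun l : {l : Fin N // blk l = j} => xstar l.1)).toReal with hSdef
  have hS : (S : EReal) = ∑ j ∈ Finset.univ.erase i,
      G j (fun l : {l : Fin N // blk l = j} => xstar l.1) := by
    rw [hSdef, coe_sum']
    exact Finset.sum_congr rfl (fun j _ => EReal.coe_toReal (hGtop j) (hGbot j))
  -- Step 1 : v ∈ subdiff (G i) xs
  have key : v ∈ subdiff (G i) xs := by
    intro y
    by_cases hyt : G i y = ⊤
    · rw [hyt]; exact le_top
    have hyb : G i y ≠ ⊥ := (hGproper i).2 y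
    set gy : ℝ := (G i y).toReal with hgydef
    have hgy : (gy : EReal) = G i y := EReal.coe_toReal hyt hyb
    set d : Fin N → ℝ := fun l => if h : blk l = i then y ⟨l, h⟩ - xstar l else 0 with hd
    -- the perturbed blocks
    have hrest : ∀ t : ℝ, ∀ j ∈ Finset.univ.erase i,
        (fun l : {l : Fin N // blk l = j} => (xstar + t • d) l.1) =
          (fun l : {l : Fin N // blk l = j} => xstar l.1) := by
      intro t j hj
      funext l
      have hne : blk l.1 ≠ i := by rw [l.2]; exact (Finset.mem_erase.1 hj).1
      simp [hd, dif_neg hne]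
    have hresti : ∀ t : ℝ,
        (fun l : {l : Fin N // blk l = i} => (xstar + t • d) l.1) =
          (1 - t) • xs + t • y := by
      intro t
      funext l
      have : d l.1 = y l - xstar l.1 := by
        rw [hd]
        simp only [dif_pos l.2, Subtype.coe_eta]
      simp only [Pi.add_apply, Pi.smul_apply, smul_eq_mul, this, hxs]
      ring
    -- basic inequality from minimality
    have hineq : ∀ t ∈ Set.Ioc (0:ℝ) 1,
        1 / 2 * (xstar ⬝ᵥ Q.mulVec xstar) + f (A.mulVec xstar) + c ≤
        1 / 2 * ((xstar + t • d) ⬝ᵥ Q.mulVec (xstar + t • d))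
          + f (A.mulVec (xstar + t • d)) + ((1 - t) * c + t * gy) := by
      intro t ht
      have h1 : P xstar ≤ P (xstar + t • d) := hmin (Set.mem_univ _)
      rw [hP, hP] at h1
      have hsum1 : ∑ j, G j (fun l : {l : Fin N // blk l = j} => xstar l.1)
          = ((c + S : ℝ) : EReal) := by
        rw [← Finset.add_sum_erase _ _ (Finset.mem_univ i), ← hS, ← hc,
          EReal.coe_add]
      have hsum2 : ∑ j, G j (fun l : {l : Fin N // blk l = j} => (xstar + t • d) l.1)
          ≤ (((1 - t) * c + t * gy + S : ℝ) : EReal) := by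
        rw [← Finset.add_sum_erase _ _ (Finset.mem_univ i),
          Finset.sum_congr rfl (fun j hj => by rw [hrest t j hj]), ← hS]
        have hcv := hGconv i xs y (1 - t) t (by linarith [ht.2]) ht.1.le (by ring)
        rw [← hc, ← hgy, ← EReal.coe_mul, ← EReal.coe_mul, ← EReal.coe_add] at hcv
        calc G i (fun l : {l : Fin N // blk l = i} => (xstar + t • d) l.1) + (S : EReal)
            ≤ (((1 - t) * c + t * gy : ℝ) : EReal) + (S : EReal) := by
              rw [hresti t]; exact add_le_add_left hcv _
          _ = (((1 - t) * c + t * gy + S : ℝ) : EReal) := by norm_cast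
      rw [hsum1] at h1
      have h2 : ((1 / 2 * (xstar ⬝ᵥ Q.mulVec xstar) + f (A.mulVec xstar) + (c + S) : ℝ)
          : EReal) ≤ ((1 / 2 * ((xstar + t • d) ⬝ᵥ Q.mulVec (xstar + t • d))
            + f (A.mulVec (xstar + t • d)) + ((1 - t) * c + t * gy + S) : ℝ) : EReal) := by
        rw [EReal.coe_add, EReal.coe_add]
        exact h1.trans (add_le_add_right hsum2 _)
      have h3 := EReal.coe_le_coe_iff.1 h2
      linarith
    -- derivative computation
    have hQentry : ∀ k l, Q k l = Q l k := by
      intro k l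
      have := hQ.1.apply l k
      simpa using this
    have hsymm : ∀ u w : Fin N → ℝ, u ⬝ᵥ Q.mulVec w = w ⬝ᵥ Q.mulVec u := by
      intro u w
      simp only [dotProduct, mulVec, Finset.mul_sum]
      rw [Finset.sum_comm]
      exact Finset.sum_congr rfl fun k _ => Finset.sum_congr rfl fun l _ => by
        rw [hQentry l k]; ring
    have hquad : ∀ t : ℝ, 1 / 2 * ((xstar + t • d) ⬝ᵥ Q.mulVec (xstar + t • d)) =
        1 / 2 * (xstar ⬝ᵥ Q.mulVec xstar) + t * (d ⬝ᵥ Q.mulVec xstar)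
          + t ^ 2 * (1 / 2 * (d ⬝ᵥ Q.mulVec d)) := by
      intro t
      have hexp : (xstar + t • d) ⬝ᵥ Q.mulVec (xstar + t • d) =
          xstar ⬝ᵥ Q.mulVec xstar + t * (xstar ⬝ᵥ Q.mulVec d)
            + t * (d ⬝ᵥ Q.mulVec xstar) + t * t * (d ⬝ᵥ Q.mulVec d) := by
        rw [Matrix.mulVec_add, Matrix.mulVec_smul]
        simp only [dotProduct_add, add_dotProduct, dotProduct_smul, smul_dotProduct,
          smul_eq_mul]
        ring
      rw [hexp, hsymm xstar d]
      ring
    have hAmul : ∀ t : ℝ, A.mulVec (xstar + t • d) = A.mulVec xstar + t • A.mulVec d := by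
      intro t
      rw [Matrix.mulVec_add, Matrix.mulVec_smul]
    set D : ℝ := d ⬝ᵥ Q.mulVec xstar + fderiv ℝ f (A.mulVec xstar) (A.mulVec d)
      + (gy - c) with hD
    set ψ : ℝ → ℝ := fun t => 1 / 2 * ((xstar + t • d) ⬝ᵥ Q.mulVec (xstar + t • d))
      + f (A.mulVec (xstar + t • d)) + t * (gy - c) with hψ
    have hψD : HasDerivAt ψ D 0 := by
      have hq : HasDerivAt (fun t : ℝ => 1 / 2 * (xstar ⬝ᵥ Q.mulVec xstar)
          + t * (d ⬝ᵥ Q.mulVec xstar) + t ^ 2 * (1 / 2 * (d ⬝ᵥ Q.mulVec d)))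
          (d ⬝ᵥ Q.mulVec xstar) 0 := by
        have h1 : HasDerivAt (fun t : ℝ => t * (d ⬝ᵥ Q.mulVec xstar))
            (d ⬝ᵥ Q.mulVec xstar) 0 := by
          simpa using (hasDerivAt_id (0:ℝ)).mul_const (d ⬝ᵥ Q.mulVec xstar)
        have h2 : HasDerivAt (fun t : ℝ => t ^ 2 * (1 / 2 * (d ⬝ᵥ Q.mulVec d))) 0 0 := by
          simpa using (hasDerivAt_pow 2 (0:ℝ)).mul_const (1 / 2 * (d ⬝ᵥ Q.mulVec d))
        have h3 := (h1.const_add (1 / 2 * (xstar ⬝ᵥ Q.mulVec xstar))).add h2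
        rw [add_zero] at h3
        exact h3
      have hcurve : HasDerivAt (fun t : ℝ => A.mulVec xstar + t • A.mulVec d)
          (A.mulVec d) 0 := by
        simpa using ((hasDerivAt_id (0:ℝ)).smul_const (A.mulVec d)).const_add
          (A.mulVec xstar)
      have hf0 : HasFDerivAt f (fderiv ℝ f (A.mulVec xstar))
          (A.mulVec xstar + (0:ℝ) • A.mulVec d) := by
        simpa using (hfdiff (A.mulVec xstar)).hasFDerivAt
      have hfc : HasDerivAt (fun t : ℝ => f (A.mulVec xstar + t • A.mulVec d))
          (fderiv ℝ f (A.mulVec xstar) (A.mulVec d)) 0 :=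
        hf0.comp_hasDerivAt 0 hcurve
      have hlin : HasDerivAt (fun t : ℝ => t * (gy - c)) (gy - c) 0 := by
        simpa using (hasDerivAt_id (0:ℝ)).mul_const (gy - c)
      have : HasDerivAt (fun t : ℝ =>
          (1 / 2 * (xstar ⬝ᵥ Q.mulVec xstar) + t * (d ⬝ᵥ Q.mulVec xstar)
            + t ^ 2 * (1 / 2 * (d ⬝ᵥ Q.mulVec d)))
          + f (A.mulVec xstar + t • A.mulVec d) + t * (gy - c)) D 0 := by
        rw [hD]
        exact (hq.add hfc).add hlin
      refine this.congr_of_eventuallyEq ?_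
      filter_upwards with t
      rw [hψ]
      simp only
      rw [hquad t, hAmul t]
    have hDnn : 0 ≤ D := by
      apply deriv_nonneg_of_min' hψD
      intro t ht
      have h0 : ψ 0 = 1 / 2 * (xstar ⬝ᵥ Q.mulVec xstar) + f (A.mulVec xstar) := by
        rw [hψ]
        simp only
        rw [zero_smul, add_zero, zero_mul, add_zero]
      have h1 := hineq t ht
      rw [h0, hψ]
      simp only
      linarith
    -- identify D with the subdifferential inequality
    have hfA : fderiv ℝ f (A.mulVec xstar) (A.mulVec d) = ∑ m, (A.mulVec d) m * ζ m := by
      have h := (fderiv ℝ f (A.mulVec xstar) : (Fin M → ℝ) →ₗ[ℝ] ℝ).pi_apply_eq_sum_univ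
        (A.mulVec d)
      rw [ContinuousLinearMap.coe_coe] at h
      rw [h]
      refine Finset.sum_congr rfl fun m _ => ?_
      have hsingle : (fun j => if m = j then (1:ℝ) else 0) = Pi.single m 1 := by
        funext j
        simp [Pi.single_apply, eq_comm]
      rw [hsingle, smul_eq_mul, hζ]
    have hsum_sub : ∀ g : Fin N → ℝ,
        ∑ l : {l : Fin N // blk l = i}, g l.1 * (y l - xs l) = ∑ l : Fin N, g l * d l := by
      intro g
      have h1 : ∑ l ∈ Finset.univ.filter (fun l => blk l = i), g l * d l
          = ∑ l : Fin N, g l * d l := by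
        apply Finset.sum_filter_of_ne
        intro l _ hne
        by_contra hbl
        apply hne
        rw [hd]
        simp [dif_neg hbl]
      rw [← h1]
      rw [Finset.sum_subtype (p := fun l => blk l = i)
        (Finset.univ.filter (fun l => blk l = i)) (fun l => by simp) (fun l => g l * d l)]
      refine Finset.sum_congr rfl fun l _ => ?_
      have : d l.1 = y l - xstar l.1 := by
        rw [hd]; simp only [dif_pos l.2, Subtype.coe_eta]
      rw [this, hxs]
    have hDval : D = ∑ l : Fin N, (ω l + ∑ m, A m l * ζ m) * d l + (gy - c) := by
      rw [hD, hfA]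
      congr 1
      have h2 : ∑ m, (A.mulVec d) m * ζ m = ∑ l : Fin N, (∑ m, A m l * ζ m) * d l := by
        simp only [mulVec, dotProduct, Finset.sum_mul]
        rw [Finset.sum_comm]
        exact Finset.sum_congr rfl fun l _ => Finset.sum_congr rfl fun m _ => by ring
      rw [h2]
      simp only [dotProduct, Finset.sum_add_distrib.symm, ← Finset.sum_add_distrib]
      exact Finset.sum_congr rfl fun l _ => by rw [hω]; ring
    -- conclude
    have hfinal : c + ∑ l : {l : Fin N // blk l = i}, v l * (y l - xs l) ≤ gy := by
      have := hDnn
      rw [hDval] at this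
      have heq : ∑ l : {l : Fin N // blk l = i}, v l * (y l - xs l)
          = -(∑ l : Fin N, (ω l + ∑ m, A m l * ζ m) * d l) := by
        rw [hsum_sub (fun l => -((∑ m, A m l * ζ m) + ω l)), ← Finset.sum_neg_distrib]
        exact Finset.sum_congr rfl fun l _ => by ring
      rw [heq]
      linarith
    rw [← hc, ← hgy]
    exact_mod_cast hfinal
  -- Step 2 : screening
  intro l0
  by_contra hne
  -- the difference vector
  set u : {l : Fin N // blk l = i} → ℝ := fun l => xs l - xhat l with hu
  have hu0 : u l0 ≠ 0 := sub_ne_zero.2 hne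
  -- xhat value is finite
  have h0mem : (0 : {l : Fin N // blk l = i} → ℝ) ∈ subdiff (G i) xhat :=
    interior_subset hint
  have hhat_le : ∀ y, G i xhat ≤ G i y := by
    intro y
    have := h0mem y
    simpa using this
  have hhat_top : G i xhat ≠ ⊤ := fun h =>
    (hGtop i) (top_le_iff.1 (h ▸ hhat_le xs))
  have hhat_bot : G i xhat ≠ ⊥ := (hGproper i).2 _
  set ch : ℝ := (G i xhat).toReal with hchdef
  have hch : (ch : EReal) = G i xhat := EReal.coe_toReal hhat_top hhat_bot
  set Dv : ℝ := c - ch with hDvdef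
  -- from v ∈ ∂G(xs) at y = xhat : ⟨v, u⟩ ≥ Dv
  have hvu : Dv ≤ ∑ l, v l * u l := by
    have := key xhat
    rw [← hc, ← hch] at this
    have h2 : c + ∑ l, v l * (xhat l - xs l) ≤ ch := by exact_mod_cast this
    have h3 : ∑ l, v l * (xhat l - xs l) = -∑ l, v l * u l := by
      rw [← Finset.sum_neg_distrib]
      exact Finset.sum_congr rfl fun l _ => by rw [hu]; ring
    rw [h3] at h2
    linarith
  -- from any w ∈ ∂G(xhat) : ⟨w, u⟩ ≤ Dv
  have hwu : ∀ w ∈ subdiff (G i) xhat, ∑ l, w l * u l ≤ Dv := by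
    intro w hw
    have := hw xs
    rw [← hc, ← hch] at this
    have h2 : ch + ∑ l, w l * (xs l - xhat l) ≤ c := by exact_mod_cast this
    have h3 : ∑ l, w l * (xs l - xhat l) = ∑ l, w l * u l :=
      Finset.sum_congr rfl fun l _ => by rw [hu]
    rw [h3] at h2
    linarith
  -- interior gives Dv > 0
  obtain ⟨ε, hε, hball⟩ := Metric.isOpen_iff.1 isOpen_interior 0 hint
  have hDvpos : 0 < Dv := by
    set w : {l : Fin N // blk l = i} → ℝ := (ε / (2 * ‖u‖)) • u with hwdef
    have hunorm : 0 < ‖u‖ := norm_pos_iff.2 (fun h => hu0 (by rw [h]; rfl))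
    have hwball : w ∈ Metric.ball (0 : {l : Fin N // blk l = i} → ℝ) ε := by
      rw [Metric.mem_ball, dist_zero_right, hwdef, norm_smul]
      rw [Real.norm_eq_abs, abs_of_pos (by positivity)]
      rw [div_mul_eq_mul_div, mul_comm (2 : ℝ) ‖u‖, ← div_div]
      rw [mul_div_assoc, div_self hunorm.ne', mul_one]
      linarith
    have hwC : w ∈ subdiff (G i) xhat := interior_subset (hball hwball)
    have h1 := hwu w hwC
    have h2 : ∑ l, w l * u l = (ε / (2 * ‖u‖)) * ∑ l, u l * u l := by
      rw [Finset.mul_sum]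
      exact Finset.sum_congr rfl fun l _ => by rw [hwdef]; simp [mul_assoc]
    have h3 : 0 < ∑ l, u l * u l := by
      apply Finset.sum_pos' (fun l _ => mul_self_nonneg _)
      exact ⟨l0, Finset.mem_univ _, mul_self_pos.2 hu0⟩
    have h4 : 0 < ∑ l, w l * u l := by
      rw [h2]; positivity
    linarith
  -- the test point
  set xt : {l : Fin N // blk l = i} → ℝ := Dv⁻¹ • u with hxt
  have hsupp : suppFn (subdiff (G i) xhat) xt ≤ 1 := by
    apply iSup₂_le
    intro w hw
    have h1 := hwu w hw
    have h2 : ∑ l, w l * xt l = Dv⁻¹ * ∑ l, w l * u l := by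
      rw [Finset.mul_sum]
      exact Finset.sum_congr rfl fun l _ => by rw [hxt]; simp; ring
    have h3 : ∑ l, w l * xt l ≤ 1 := by
      rw [h2]
      rw [inv_mul_eq_div, div_le_one hDvpos]
      exact h1
    exact_mod_cast h3
  have hpolar_ge : (1 : EReal) ≤ polarSuppFn (subdiff (G i) xhat) v := by
    have hmem : xt ∈ {x : {l : Fin N // blk l = i} → ℝ |
        suppFn (subdiff (G i) xhat) x ≤ 1} := hsupp
    have h1 : ((∑ l, v l * xt l : ℝ) : EReal) ≤ polarSuppFn (subdiff (G i) xhat) v :=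
      le_iSup₂ (f := fun x (_ : x ∈ {x | suppFn (subdiff (G i) xhat) x ≤ 1}) =>
        ((∑ a, v a * x a : ℝ) : EReal)) xt hmem
    refine le_trans ?_ h1
    have h2 : (1:ℝ) ≤ ∑ l, v l * xt l := by
      have h3 : ∑ l, v l * xt l = Dv⁻¹ * ∑ l, v l * u l := by
        rw [Finset.mul_sum]
        exact Finset.sum_congr rfl fun l _ => by rw [hxt]; simp; ring
      rw [h3]
      rw [inv_mul_eq_div, le_div_iff₀ hDvpos, one_mul]
      exact hvu
    exact_mod_cast h2
  -- contradiction with hscreen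
  have hlt : polarSuppFn (subdiff (G i) xhat) v < 1 := by
    refine lt_of_le_of_lt ?_ hscreen
    exact le_iSup₂ (f := fun p (_ : p ∈ R) => polarSuppFn (subdiff (G i) xhat)
      (fun l => -((∑ m, A m l.1 * p.1 m) + p.2 l.1))) (ζ, ω) hR
  exact absurd (hpolar_ge.trans_lt hlt) (lt_irrefl _)
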